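/- Fix t > 0. Then, as ε → 0⁺, the integral I(ε) = (1/ε) ∫_{ℝ²} |1 − i t/(2|p|)| · (p₁⁴/(4|p|⁴)) · exp(−|p|²/(ε(1+ε))) dp satisfies: I(ε) = ε^{−1/2} ∫₀^∞ ∫₀^{2π} |√ε r − i t/2| (cos⁴θ / 4) exp(−r²/(1+ε)) dr dθ, and consequently there exist constants c, C > 0 and ε₀ > 0 (depending on t) such that c ε^{−1/2} ≤ I(ε) ≤ C ε^{−1/2} for all ε ∈ (0, ε₀]. In particular I(ε) → ∞ as ε → 0, which shows that the frozen Gaussian approximation applied to the low-frequency Gaussian initial datum u₀ = (e^{−|x|²/2}, 0, 0)ᵀ for the 2D constant-coefficient acoustic system produces an approximant whose L² norm blows up like ε^{−1/4}, while the true solution has L² norm of order 1; hence the frozen Gaussian approximation fails for initial data that are not asymptotically high frequency. -/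

import Mathlib

/-!
In polar coordinates `p = r (cos θ, sin θ)` the angular factor `p₁⁴ / (4|p|⁴)` becomes
`cos⁴θ / 4`, whose integral over a period is `3π/16`, and the Jacobian `r` turns
`|1 - it/(2r)|` into `|r - it/2|`. Rescaling `r = √ε s` converts `1/ε` into `ε^{-1/2}` and leaves
the radial integral of `|√ε s - it/2| e^{-s²/(1+ε)}`. For `ε ∈ [0, 1]` this integral is squeezed
between `(|t|/2) ∫ e^{-s²}` (the modulus is at least the imaginary part `|t|/2`) and
`∫ (s + |t|/2) e^{-s²/2}`, so `I(ε) ≍ ε^{-1/2}`.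
-/

open MeasureTheory Filter

/-- The integral `I(ε)` from the counterexample: the squared phase-space `L²` norm of the
leading-order frozen Gaussian amplitude applied to the FBI transform of the Gaussian datum
reduces (up to bounded factors) to this quantity. -/
noncomputable def Ifun (t : ℝ) (ε : ℝ) : ℝ :=
  (1/ε) * ∫ p : ℝ × ℝ,
    ‖(1 - Complex.I * (t:ℂ) / (2 * (Real.sqrt (p.1^2 + p.2^2) : ℂ)))‖ *
      (p.1^4 / (4 * (p.1^2 + p.2^2)^2)) *
      Real.exp (-(p.1^2 + p.2^2) / (ε * (1+ε)))

open Real Set Topology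

theorem integral_cos_pow_four_period (a : ℝ) :
    ∫ θ in a..a + 2 * π, cos θ ^ 4 = 3 * π / 4 := by
  rw [integral_cos_pow (n := 2), integral_cos_sq]
  simp only [cos_add_two_pi, sin_add_two_pi]
  ring

theorem integral_radial_mul_cos_pow_four (f : ℝ → ℝ) :
    ∫ p : ℝ × ℝ, f √(p.1 ^ 2 + p.2 ^ 2) * (p.1 ^ 4 / (p.1 ^ 2 + p.2 ^ 2) ^ 2) =
      3 * π / 4 * ∫ r in Ioi 0, r * f r := by
  have hcos : ∫ θ in -π..π, cos θ ^ 4 = 3 * π / 4 := by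
    simpa only [neg_add_eq_sub, two_mul, add_sub_cancel_right]
      using integral_cos_pow_four_period (-π)
  rw [← integral_comp_polarCoord_symm]
  refine (setIntegral_congr_fun polarCoord.open_target.measurableSet
    (g := fun p : ℝ × ℝ => p.1 * f p.1 * cos p.2 ^ 4) ?_).trans ?_
  · rintro ⟨r, θ⟩ ⟨hr, -⟩
    have hr : 0 < r := hr
    have hnorm : (r * cos θ) ^ 2 + (r * sin θ) ^ 2 = r ^ 2 := by
      linear_combination r ^ 2 * sin_sq_add_cos_sq θ
    simp only [polarCoord_symm_apply, hnorm, sqrt_sq hr.le, smul_eq_mul]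
    field_simp
  rw [polarCoord_target, Measure.volume_eq_prod,
    setIntegral_prod_mul (fun r => r * f r) (fun θ => cos θ ^ 4),
    ← integral_Ioc_eq_integral_Ioo, ← intervalIntegral.integral_of_le (by linarith [pi_pos]), hcos]
  ring

noncomputable def radialProfile (t ε r : ℝ) : ℝ :=
  ‖((√ε * r : ℝ) : ℂ) - Complex.I * t / 2‖ * exp (-r ^ 2 / (1 + ε))

theorem integral_Ifun_integrand (t : ℝ) {ε : ℝ} (hε : 0 < ε) :
    ∫ p : ℝ × ℝ,
      ‖(1 - Complex.I * (t:ℂ) / (2 * (Real.sqrt (p.1^2 + p.2^2) : ℂ)))‖ *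
        (p.1^4 / (4 * (p.1^2 + p.2^2)^2)) *
        Real.exp (-(p.1^2 + p.2^2) / (ε * (1+ε)))
      = 3 * π / 16 * (√ε * ∫ r in Ioi 0, radialProfile t ε r) := by
  set g : ℝ → ℝ := fun r => ‖1 - Complex.I * t / (2 * r)‖ * exp (-r ^ 2 / (ε * (1 + ε))) / 4
  set f : ℝ → ℝ := fun r => ‖(r : ℂ) - Complex.I * t / 2‖ * exp (-r ^ 2 / (ε * (1 + ε)))
  have hradial : ∀ p : ℝ × ℝ,
      ‖(1 - Complex.I * (t:ℂ) / (2 * (Real.sqrt (p.1^2 + p.2^2) : ℂ)))‖ *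
        (p.1^4 / (4 * (p.1^2 + p.2^2)^2)) * Real.exp (-(p.1^2 + p.2^2) / (ε * (1+ε)))
      = g √(p.1 ^ 2 + p.2 ^ 2) * (p.1 ^ 4 / (p.1 ^ 2 + p.2 ^ 2) ^ 2) := by
    intro p
    simp only [g, sq_sqrt (by positivity : 0 ≤ p.1 ^ 2 + p.2 ^ 2), ← div_div]
    ring
  have hpolar : ∀ r ∈ Ioi (0 : ℝ), r * g r = f r / 4 := by
    intro r hr
    have hr' : (r : ℂ) ≠ 0 := by exact_mod_cast hr.ne'
    have hfactor : (r : ℂ) * (1 - Complex.I * t / (2 * r)) = r - Complex.I * t / 2 := by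
      field_simp
    simp only [f, g, ← hfactor, norm_mul, Complex.norm_real, norm_of_nonneg hr.le]
    ring
  have hscale : ∫ r in Ioi 0, f r = √ε * ∫ r in Ioi 0, radialProfile t ε r := by
    have := integral_comp_mul_left_Ioi' f 0 (sqrt_pos.mpr hε)
    rw [mul_zero] at this
    rw [← this, smul_eq_mul]
    congr 2 with r
    simp only [f, radialProfile, mul_pow, sq_sqrt hε.le]
    congr 2
    field_simp
  rw [integral_congr_ae (.of_forall hradial), integral_radial_mul_cos_pow_four,
    setIntegral_congr_fun measurableSet_Ioi hpolar, integral_div, hscale]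
  ring

theorem Ifun_eq_rpow_mul_integral_radialProfile (t : ℝ) {ε : ℝ} (hε : 0 < ε) :
    Ifun t ε = ε ^ (-(1:ℝ)/2) * (3 * π / 16 * ∫ r in Ioi 0, radialProfile t ε r) := by
  have hrpow : 1 / ε * √ε = ε ^ (-(1:ℝ)/2) := by
    rw [sqrt_eq_rpow, one_div, ← rpow_neg_one, ← rpow_add hε]
    norm_num
  rw [Ifun, integral_Ifun_integrand t hε, ← hrpow]
  ring

theorem intervalIntegral_cos_pow_four_eq_radialProfile (t ε r : ℝ) :
    ∫ θ in (0:ℝ)..(2*Real.pi),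
      ‖(((Real.sqrt ε * r : ℝ) : ℂ) - Complex.I * (t:ℂ) / 2)‖ *
        (Real.cos θ^4 / 4) * Real.exp (-r^2 / (1+ε))
      = 3 * π / 16 * radialProfile t ε r := by
  have hcos := integral_cos_pow_four_period 0
  rw [zero_add] at hcos
  have hsplit : ∀ θ : ℝ, ‖(((√ε * r : ℝ) : ℂ) - Complex.I * t / 2)‖ *
      (cos θ ^ 4 / 4) * exp (-r ^ 2 / (1 + ε)) = radialProfile t ε r / 4 * cos θ ^ 4 := by
    intro θ
    rw [radialProfile]
    ring
  simp only [hsplit]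
  rw [intervalIntegral.integral_const_mul, hcos]
  ring

theorem abs_mul_exp_le_radialProfile (r : ℝ) {t ε : ℝ} (hε : 0 ≤ ε) :
    |t| / 2 * exp (-1 * r ^ 2) ≤ radialProfile t ε r := by
  have hnorm : |t| / 2 ≤ ‖((√ε * r : ℝ) : ℂ) - Complex.I * t / 2‖ := by
    convert Complex.abs_im_le_norm (((√ε * r : ℝ) : ℂ) - Complex.I * t / 2) using 1
    simp [abs_div]
  have hexp : exp (-1 * r ^ 2) ≤ exp (-r ^ 2 / (1 + ε)) := by
    gcongr
    rw [neg_div, neg_one_mul, neg_le_neg_iff]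
    exact div_le_self (sq_nonneg r) (by linarith)
  exact mul_le_mul hnorm hexp (exp_nonneg _) (norm_nonneg _)

theorem radialProfile_le (t : ℝ) {r ε : ℝ} (hr : 0 ≤ r) (hε : ε ∈ Icc 0 1) :
    radialProfile t ε r ≤ (r + |t| / 2) * exp (-(1 / 2) * r ^ 2) := by
  have hnorm : ‖((√ε * r : ℝ) : ℂ) - Complex.I * t / 2‖ ≤ r + |t| / 2 := by
    refine (norm_sub_le _ _).trans ?_
    have : √ε * r ≤ r := mul_le_of_le_one_left hr (sqrt_le_one.mpr hε.2)
    rw [Complex.norm_real, norm_of_nonneg (by positivity)]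
    simpa [abs_div] using this
  have hexp : exp (-r ^ 2 / (1 + ε)) ≤ exp (-(1 / 2) * r ^ 2) := by
    gcongr
    rw [neg_div, neg_mul, neg_le_neg_iff, one_div_mul_eq_div]
    exact div_le_div_of_nonneg_left (sq_nonneg r) (by linarith [hε.1]) (by linarith [hε.2])
  exact mul_le_mul hnorm hexp (exp_nonneg _) (by positivity)

theorem integral_radialProfile_mem_Icc (t : ℝ) {ε : ℝ} (hε : ε ∈ Icc 0 1) :
    ∫ r in Ioi 0, radialProfile t ε r ∈
      Icc (|t| / 2 * (√π / 2)) (∫ r in Ioi 0, (r + |t| / 2) * exp (-(1 / 2) * r ^ 2)) := by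
  have hupper_int : Integrable fun r : ℝ => (r + |t| / 2) * exp (-(1 / 2) * r ^ 2) := by
    simpa only [add_mul, Pi.add_def] using (integrable_mul_exp_neg_mul_sq (by norm_num)).add
      ((integrable_exp_neg_mul_sq (by norm_num)).const_mul (|t| / 2))
  have hprofile_int : IntegrableOn (radialProfile t ε) (Ioi 0) := by
    refine hupper_int.integrableOn.mono' (by unfold radialProfile; fun_prop) ?_
    refine (ae_restrict_iff' measurableSet_Ioi).mpr (.of_forall fun r hr => ?_)
    rw [norm_of_nonneg (by unfold radialProfile; positivity)]
    exact radialProfile_le t hr.le hε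
  constructor
  · calc |t| / 2 * (√π / 2) = ∫ r in Ioi 0, |t| / 2 * exp (-1 * r ^ 2) := by
          rw [integral_const_mul, integral_gaussian_Ioi, div_one]
      _ ≤ _ := setIntegral_mono_on ((integrable_exp_neg_mul_sq one_pos).const_mul _).integrableOn
          hprofile_int measurableSet_Ioi fun r _ => abs_mul_exp_le_radialProfile r hε.1
  · exact setIntegral_mono_on hprofile_int hupper_int.integrableOn measurableSet_Ioi
      fun r hr => radialProfile_le t hr.le hε

/-- As `ε → 0⁺`, `I(ε)` has the polar-coordinate representation
`I(ε) = ε^{−1/2} ∫₀^∞∫₀^{2π} |√ε r − it/2| (cos⁴θ/4) e^{−r²/(1+ε)} dθ dr`,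
is comparable to `ε^{−1/2}`, and blows up; this shows the frozen Gaussian approximation
fails for the low-frequency Gaussian datum of the 2D acoustic system. -/
theorem Ifun_blowup (t : ℝ) (ht : 0 < t) :
    (∀ ε : ℝ, 0 < ε →
      Ifun t ε = ε ^ (-(1:ℝ)/2) *
        ∫ r in Set.Ioi (0:ℝ), ∫ θ in (0:ℝ)..(2*Real.pi),
          ‖(((Real.sqrt ε * r : ℝ) : ℂ) - Complex.I * (t:ℂ) / 2)‖ *
            (Real.cos θ^4 / 4) * Real.exp (-r^2 / (1+ε))) ∧
    (∃ c C ε₀ : ℝ, 0 < c ∧ 0 < C ∧ 0 < ε₀ ∧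
      ∀ ε ∈ Set.Ioc (0:ℝ) ε₀,
        c * ε ^ (-(1:ℝ)/2) ≤ Ifun t ε ∧ Ifun t ε ≤ C * ε ^ (-(1:ℝ)/2)) ∧
    Tendsto (Ifun t) (nhdsWithin 0 (Set.Ioi 0)) atTop := by
  set c := 3 * π / 16 * (|t| / 2 * (√π / 2))
  set C := 3 * π / 16 * ∫ r in Ioi 0, (r + |t| / 2) * exp (-(1 / 2) * r ^ 2)
  have hbounds : ∀ ε ∈ Ioc (0:ℝ) 1,
      c * ε ^ (-(1:ℝ)/2) ≤ Ifun t ε ∧ Ifun t ε ≤ C * ε ^ (-(1:ℝ)/2) := by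
    intro ε hε
    obtain ⟨hlower, hupper⟩ := integral_radialProfile_mem_Icc t (Ioc_subset_Icc_self hε)
    have hrpow : 0 ≤ ε ^ (-(1:ℝ)/2) := (rpow_pos_of_pos hε.1 _).le
    have hπ : 0 ≤ 3 * π / 16 := by positivity
    rw [Ifun_eq_rpow_mul_integral_radialProfile t hε.1, mul_comm c, mul_comm C]
    exact ⟨mul_le_mul_of_nonneg_left (mul_le_mul_of_nonneg_left hlower hπ) hrpow,
      mul_le_mul_of_nonneg_left (mul_le_mul_of_nonneg_left hupper hπ) hrpow⟩
  have hc : 0 < c := by have := abs_pos.mpr ht.ne'; positivity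
  have hcC : c ≤ C := by
    have := integral_radialProfile_mem_Icc t (ε := 1) (by norm_num)
    exact mul_le_mul_of_nonneg_left (this.1.trans this.2) (by positivity)
  refine ⟨fun ε hε => ?_, ⟨c, C, 1, hc, hc.trans_le hcC, one_pos, hbounds⟩, ?_⟩
  · simp only [intervalIntegral_cos_pow_four_eq_radialProfile, integral_const_mul]
    exact Ifun_eq_rpow_mul_integral_radialProfile t hε
  · have hblowup := tendsto_rpow_neg_nhdsGT_zero (by norm_num : -(1:ℝ)/2 < 0)
    refine tendsto_atTop_mono' _ ?_ (hblowup.const_mul_atTop hc)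
    filter_upwards [Ioc_mem_nhdsGT one_pos] with ε hε
    exact (hbounds ε hε).1
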